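/- arXiv:2412.00337 — 2 statements merged into one kernel-verified Lean document; each statement's English description precedes it below -/
import Mathlib

section
/- If a graph G has a generating sequence (G_1, …, G_k), then for every i ∈ [k] the graph G also has a generating sequence (H_1, …, H_k) of the same length with H_1 = G_i. -/
open SimpleGraph

/-- `S` is a stable cutset of `G`: an independent set whose removal disconnects `G`. -/
def SimpleGraph.IsStableCutset {V : Type*} (G : SimpleGraph V) (S : Set V) : Prop :=
  (∀ a ∈ S, ∀ b ∈ S, ¬ G.Adj a b) ∧ ¬ (G.induce Sᶜ).Preconnected

def SimpleGraph.HasStableCutset {V : Type*} (G : SimpleGraph V) : Prop :=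
  ∃ S : Set V, G.IsStableCutset S

/-- The cycle on six vertices. -/
def CycleSix : SimpleGraph (Fin 6) := SimpleGraph.fromRel (fun i j => j = i + 1)

/-- The complement of `C₆`, i.e. the triangular prism. -/
def PrismGraph : SimpleGraph (Fin 6) := CycleSixᶜ

/-- Graphs on (subsets of) a fixed ambient vertex type `α`, with graph-wise
union and intersection given by the lattice structure. -/
abbrev AmbGraph (α : Type*) := SimpleGraph.Subgraph (⊤ : SimpleGraph α)

def IsK2 {α : Type*} (H : AmbGraph α) : Prop :=
  Nonempty (H.coe ≃g (⊤ : SimpleGraph (Fin 2)))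

def IsK3 {α : Type*} (H : AmbGraph α) : Prop :=
  Nonempty (H.coe ≃g (⊤ : SimpleGraph (Fin 3)))

def IsPrism {α : Type*} (H : AmbGraph α) : Prop :=
  Nonempty (H.coe ≃g PrismGraph)

/-- The class `G_sc` of Le and Pfender. -/
inductive Gsc {α : Type*} : AmbGraph α → Prop
  | k3 (H : AmbGraph α) : IsK3 H → Gsc H
  | prism (H : AmbGraph α) : IsPrism H → Gsc H
  | union (G H : AmbGraph α) : Gsc G → Gsc H →
      (IsK2 (G ⊓ H) ∨ IsK3 (G ⊓ H)) → Gsc (G ⊔ H)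

def unionList {α : Type*} (L : List (AmbGraph α)) : AmbGraph α := L.foldr (· ⊔ ·) ⊥

/-- `L = (G₁,…,G_k)` is a generating sequence for `G`. -/
def IsGenSeq {α : Type*} (L : List (AmbGraph α)) (G : AmbGraph α) : Prop :=
  L ≠ [] ∧ (∀ H ∈ L, IsK3 H ∨ IsPrism H) ∧
  (∀ i : ℕ, (h : i + 1 < L.length) →
     IsK2 (unionList (L.take (i + 1)) ⊓ L.get ⟨i + 1, h⟩) ∨
     IsK3 (unionList (L.take (i + 1)) ⊓ L.get ⟨i + 1, h⟩)) ∧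
  unionList L = G

/-!
Gluing along complete graphs keeps every complete subgraph inside a single piece: if `A ⊓ B`
is complete, a complete `S ≤ A ⊔ B` lies in `A` or in `B`. Induct on the sequence from the
right. If the graph `x` that should come first is the last one, its intersection `S` with the
union of the earlier graphs is complete, so it lies in one earlier graph `G`. Reorder the
earlier graphs to start with `G` and put `x` in front: every later graph meets `x` only inside
`S ⊆ G`, which is already covered, so none of the later intersections changes.
-/

section

variable {α : Type*}

@[simp]
lemma unionList_nil : unionList ([] : List (AmbGraph α)) = ⊥ := rfl

@[simp]
lemma unionList_cons (H : AmbGraph α) (L : List (AmbGraph α)) :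
    unionList (H :: L) = H ⊔ unionList L := rfl

lemma List.Perm.unionList_eq {L M : List (AmbGraph α)} (h : L.Perm M) :
    unionList L = unionList M :=
  h.foldr_op_eq

lemma unionList_append_singleton (L : List (AmbGraph α)) (H : AmbGraph α) :
    unionList (L ++ [H]) = unionList L ⊔ H :=
  (List.perm_append_singleton H L).unionList_eq.trans (sup_comm _ _)

lemma le_unionList {L : List (AmbGraph α)} {H : AmbGraph α} (hH : H ∈ L) :
    H ≤ unionList L := by
  induction L with
  | nil => simp at hH
  | cons G L ih =>
    rcases List.mem_cons.1 hH with rfl | hH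
    · exact le_sup_left
    · exact (ih hH).trans le_sup_right

lemma pairwise_adj_of_iso_top {β : Type*} {H : AmbGraph α}
    (e : H.coe ≃g (⊤ : SimpleGraph β)) : H.verts.Pairwise H.Adj := fun a ha b hb hab =>
  e.map_adj_iff (v := ⟨a, ha⟩) (w := ⟨b, hb⟩) |>.1 <|
    (top_adj _ _).2 <| e.injective.ne <| by simpa using hab

lemma pairwise_adj_of_isK2_or_isK3 {H : AmbGraph α} (h : IsK2 H ∨ IsK3 H) :
    H.verts.Pairwise H.Adj :=
  h.elim (fun ⟨e⟩ => pairwise_adj_of_iso_top e) (fun ⟨e⟩ => pairwise_adj_of_iso_top e)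

section Gluing

variable {A B S : AmbGraph α}

lemma le_of_le_sup_of_verts_subset (hAB : (A ⊓ B).verts.Pairwise (A ⊓ B).Adj)
    (hSAB : S ≤ A ⊔ B) (hSA : S.verts ⊆ A.verts) : S ≤ A :=
  ⟨hSA, fun _ _ h => (hSAB.2 h).elim id fun hB =>
    (hAB ⟨hSA h.fst_mem, hB.fst_mem⟩ ⟨hSA h.snd_mem, hB.snd_mem⟩ h.ne).1⟩

lemma le_or_le_of_le_sup (hAB : (A ⊓ B).verts.Pairwise (A ⊓ B).Adj)
    (hS : S.verts.Pairwise S.Adj) (hSAB : S ≤ A ⊔ B) : S ≤ A ∨ S ≤ B := by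
  by_contra! h
  obtain ⟨a, haS, haA⟩ := Set.not_subset.1 fun hSA =>
    h.1 (le_of_le_sup_of_verts_subset hAB hSAB hSA)
  obtain ⟨b, hbS, hbB⟩ := Set.not_subset.1 fun hSB =>
    h.2 (le_of_le_sup_of_verts_subset (inf_comm A B ▸ hAB) (sup_comm A B ▸ hSAB) hSB)
  have hab : a ≠ b := by
    rintro rfl
    rcases hSAB.1 haS with ha | ha <;> contradiction
  rcases hSAB.2 (hS haS hbS hab) with h | h
  · exact haA h.fst_mem
  · exact hbB h.snd_mem

lemma sup_inf_eq_inf_of_inter_subset {P N : AmbGraph α}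
    (hPN : (P ⊓ N).verts.Pairwise (P ⊓ N).Adj) (hAN : A.verts ∩ N.verts ⊆ P.verts) :
    (A ⊔ P) ⊓ N = P ⊓ N := by
  have hverts : ((A ⊔ P) ⊓ N).verts ⊆ (P ⊓ N).verts := by
    rintro a ⟨ha | ha, haN⟩
    · exact ⟨hAN ⟨ha, haN⟩, haN⟩
    · exact ⟨ha, haN⟩
  refine le_antisymm ?_ (inf_le_inf_right N le_sup_right)
  exact ⟨hverts, fun a b hab => hPN (hverts hab.fst_mem) (hverts hab.snd_mem) hab.ne⟩

end Gluing

def GluedAlong (Q : AmbGraph α → Prop) (L : List (AmbGraph α)) : Prop :=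
  ∀ L₁ H L₂, L = L₁ ++ H :: L₂ → L₁ ≠ [] → Q (unionList L₁ ⊓ H)

namespace GluedAlong

variable {Q : AmbGraph α → Prop} {L : List (AmbGraph α)}

lemma iff_get : GluedAlong Q L ↔
    ∀ i : ℕ, (h : i + 1 < L.length) →
      Q (unionList (L.take (i + 1)) ⊓ L.get ⟨i + 1, h⟩) := by
  refine ⟨fun hL i h => hL _ _ (L.drop (i + 2)) ?_ ?_, ?_⟩
  · rw [List.get_eq_getElem, ← List.drop_eq_getElem_cons, List.take_append_drop]
  · exact List.ne_nil_of_length_pos (by simp; omega)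
  · rintro hL L₁ H L₂ rfl hL₁
    obtain ⟨i, hi⟩ : ∃ i, L₁.length = i + 1 :=
      Nat.exists_eq_add_one.2 (List.length_pos_iff.2 hL₁)
    have h : i + 1 < (L₁ ++ H :: L₂).length := by simp; omega
    simpa [← hi] using hL i h

lemma append_singleton_iff {H : AmbGraph α} :
    GluedAlong Q (L ++ [H]) ↔ GluedAlong Q L ∧ (L ≠ [] → Q (unionList L ⊓ H)) := by
  refine ⟨fun hL => ⟨fun L₁ G L₂ h => hL L₁ G (L₂ ++ [H]) (by simp [h]),
    hL L H [] rfl⟩, ?_⟩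
  rintro ⟨hL, hLH⟩ L₁ G L₂ h hL₁
  rcases L₂.eq_nil_or_concat with rfl | ⟨L₂, K, rfl⟩
  · obtain ⟨rfl, ⟨⟩⟩ := List.append_inj' h rfl
    exact hLH hL₁
  · rw [List.concat_eq_append, ← List.cons_append, ← List.append_assoc] at h
    obtain ⟨rfl, -⟩ := List.append_inj' h rfl
    exact hL L₁ G L₂ rfl hL₁

variable (hQ : ∀ S, Q S → S.verts.Pairwise S.Adj)
include hQ

lemma cons {G H : AmbGraph α} (hL : GluedAlong Q (G :: L)) (hHG : Q (H ⊓ G))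
    (hHL : H.verts ∩ (unionList L).verts ⊆ G.verts) : GluedAlong Q (H :: G :: L) := by
  rintro (_ | ⟨_, _ | ⟨_, L₁⟩⟩) K L₂ h hL₁
  · exact absurd rfl hL₁
  · simp only [List.nil_append, List.cons_append, List.cons.injEq] at h
    obtain ⟨rfl, rfl, -⟩ := h
    simpa using hHG
  · simp only [List.cons_append, List.cons.injEq] at h
    obtain ⟨rfl, rfl, rfl⟩ := h
    have hK : K ≤ unionList (L₁ ++ K :: L₂) := le_unionList (by simp)
    have hGK := hL (G :: L₁) K L₂ rfl (List.cons_ne_nil _ _)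
    rw [unionList_cons, sup_inf_eq_inf_of_inter_subset (hQ _ hGK)]
    · exact hGK
    · exact fun a ha => Or.inl (hHL ⟨ha.1, hK.1 ha.2⟩)

lemma exists_le_of_pairwise (hL : GluedAlong Q L) (hL₀ : L ≠ []) {S : AmbGraph α}
    (hS : S.verts.Pairwise S.Adj) (hSL : S ≤ unionList L) : ∃ G ∈ L, S ≤ G := by
  induction L using List.reverseRecOn with
  | nil => exact absurd rfl hL₀
  | append_singleton L H ih =>
    rw [unionList_append_singleton] at hSL
    obtain ⟨hL, hLH⟩ := append_singleton_iff.1 hL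
    rcases eq_or_ne L [] with rfl | hL₀
    · exact ⟨H, by simp, by simpa using hSL⟩
    rcases le_or_le_of_le_sup (hQ _ (hLH hL₀)) hS hSL with hSL | hSH
    · obtain ⟨G, hG, hSG⟩ := ih hL hL₀ hSL
      exact ⟨G, List.mem_append_left _ hG, hSG⟩
    · exact ⟨H, by simp, hSH⟩

lemma exists_perm_head (hL : GluedAlong Q L) {H : AmbGraph α} (hH : H ∈ L) :
    ∃ M : List (AmbGraph α), M.Perm L ∧ GluedAlong Q M ∧ M.head? = some H := by
  induction L using List.reverseRecOn generalizing H with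
  | nil => simp at hH
  | append_singleton L x ih =>
    obtain ⟨hL', hLx⟩ := append_singleton_iff.1 hL
    rcases List.mem_append.1 hH with hH | hH
    · obtain ⟨M, hML, hM, hMH⟩ := ih hL' hH
      refine ⟨M ++ [x], hML.append_right [x], append_singleton_iff.2 ⟨hM, fun _ => ?_⟩, ?_⟩
      · rw [hML.unionList_eq]
        exact hLx (List.ne_nil_of_mem hH)
      · simp [List.head?_append, hMH]
    obtain rfl := List.mem_singleton.1 hH
    rcases eq_or_ne L [] with rfl | hL₀
    · exact ⟨[] ++ [H], List.Perm.refl _, hL, rfl⟩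
    obtain ⟨G, hG, hSG⟩ :=
      hL'.exists_le_of_pairwise hQ hL₀ (hQ _ (hLx hL₀)) (inf_le_left (b := H))
    obtain ⟨M, hML, hM, hMG⟩ := ih hL' hG
    obtain ⟨M, rfl⟩ := List.head?_eq_some_iff.1 hMG
    have hHG : H ⊓ G = unionList L ⊓ H :=
      le_antisymm (le_inf (inf_le_right.trans (le_unionList hG)) inf_le_left)
        (le_inf inf_le_right hSG)
    refine ⟨H :: G :: M, (hML.cons H).trans (List.perm_append_singleton H L).symm,
      hM.cons hQ (hHG ▸ hLx hL₀) fun a ha => hSG.1 ⟨?_, ha.1⟩, rfl⟩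
    rw [← hML.unionList_eq]
    exact Or.inr ha.2

end GluedAlong

lemma isGenSeq_iff {L : List (AmbGraph α)} {G : AmbGraph α} :
    IsGenSeq L G ↔ L ≠ [] ∧ (∀ H ∈ L, IsK3 H ∨ IsPrism H) ∧
      GluedAlong (fun S => IsK2 S ∨ IsK3 S) L ∧ unionList L = G := by
  rw [GluedAlong.iff_get]
  rfl

end

/-- If `G` has a generating sequence `(G₁,…,G_k)`, then for every `i ∈ [k]` it also
has a generating sequence of the same length starting with `G_i`. -/
theorem genSeq_start_anywhere {α : Type*} (G : AmbGraph α)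
    (L : List (AmbGraph α)) (hL : IsGenSeq L G) :
    ∀ i : ℕ, (h : i < L.length) →
      ∃ M : List (AmbGraph α), IsGenSeq M G ∧ M.length = L.length ∧
        M.head? = some (L.get ⟨i, h⟩) := by
  intro i hi
  obtain ⟨-, hmem, hglued, rfl⟩ := isGenSeq_iff.1 hL
  obtain ⟨M, hML, hM, hMhead⟩ :=
    hglued.exists_perm_head (fun _ => pairwise_adj_of_isK2_or_isK3) (L.get_mem ⟨i, hi⟩)
  refine ⟨M, isGenSeq_iff.2 ⟨?_, fun H hH => hmem H (hML.mem_iff.1 hH), hM, hML.unionList_eq⟩,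
    hML.length_eq, hMhead⟩
  rintro rfl
  simp at hMhead
end

section
/- Every graph in G_sc on n vertices with n ≥ 4 contains no induced cycle of length 5. -/
open SimpleGraph

instance : DecidableRel CycleSix.Adj := fun a b =>
  decidable_of_iff (a ≠ b ∧ (b = a + 1 ∨ a = b + 1)) (by simp [CycleSix, SimpleGraph.fromRel_adj])

instance : DecidableRel PrismGraph.Adj := fun a b =>
  decidable_of_iff (a ≠ b ∧ ¬ CycleSix.Adj a b) (by simp [PrismGraph, compl_adj])

set_option maxRecDepth 40000 in
lemma prism_no5 : ∀ a b c d e : Fin 6,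
    ¬(PrismGraph.Adj a b ∧ PrismGraph.Adj b c ∧ PrismGraph.Adj c d ∧
      PrismGraph.Adj d e ∧ PrismGraph.Adj e a ∧ ¬PrismGraph.Adj a c ∧
      ¬PrismGraph.Adj a d ∧ ¬PrismGraph.Adj b d ∧ ¬PrismGraph.Adj b e ∧
      ¬PrismGraph.Adj c e ∧ a ≠ c ∧ a ≠ d ∧ b ≠ d ∧ b ≠ e ∧ c ≠ e) := by decide

set_option maxRecDepth 40000 in
lemma fin5_cut : ∀ g : Fin 5 → Fin 3, (∃ i, g i = 0) → (∃ i, g i = 1) →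
    (∀ i j, g i = 2 → g j = 2 → i ≠ j → (j = i + 1 ∨ i = j + 1)) →
    ∃ i j, (j = i + 1 ∨ i = j + 1) ∧ g i = 0 ∧ g j = 1 := by decide

/-- In a subgraph isomorphic to a complete graph, distinct vertices are adjacent. -/
lemma inter_adj {α : Type*} {K : AmbGraph α} (h : IsK2 K ∨ IsK3 K) {a b : α}
    (ha : a ∈ K.verts) (hb : b ∈ K.verts) (hne : a ≠ b) : K.Adj a b := by
  have key : ∀ {n : ℕ}, (K.coe ≃g (⊤ : SimpleGraph (Fin n))) → K.Adj a b := by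
    intro n e
    have h1 : K.coe.Adj ⟨a, ha⟩ ⟨b, hb⟩ := by
      rw [← e.map_adj_iff, SimpleGraph.top_adj]
      intro hc
      exact hne (Subtype.mk_eq_mk.mp (e.toEquiv.injective hc))
    rwa [SimpleGraph.Subgraph.coe_adj] at h1
  rcases h with h' | h'
  · exact key (Classical.choice h')
  · exact key (Classical.choice h')

lemma gsc_no_C5 {α : Type*} (G : AmbGraph α) (h : Gsc G) :
    ¬ ∃ f : Fin 5 → G.verts, Function.Injective f ∧
        ∀ i j : Fin 5, G.coe.Adj (f i) (f j) ↔ (j = i + 1 ∨ i = j + 1) := by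
  induction h with
  | k3 H hk =>
    rintro ⟨f, finj, -⟩
    obtain ⟨e⟩ := hk
    have hinj : Function.Injective (e.toEquiv ∘ f) := e.toEquiv.injective.comp finj
    have := Fintype.card_le_of_injective _ hinj
    simp [Fintype.card_fin] at this
  | prism H hp =>
    rintro ⟨f, finj, hadj⟩
    obtain ⟨e⟩ := hp
    have hA : ∀ i j : Fin 5, (j = i + 1 ∨ i = j + 1) → PrismGraph.Adj (e (f i)) (e (f j)) :=
      fun i j hc => e.map_adj_iff.mpr ((hadj i j).mpr hc)
    have hN : ∀ i j : Fin 5, ¬(j = i + 1 ∨ i = j + 1) → ¬PrismGraph.Adj (e (f i)) (e (f j)) :=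
      fun i j hc hadj' => hc ((hadj i j).mp (e.map_adj_iff.mp hadj'))
    have hD : ∀ i j : Fin 5, i ≠ j → e (f i) ≠ e (f j) :=
      fun i j hij hc => hij (finj (e.toEquiv.injective hc))
    exact prism_no5 (e (f 0)) (e (f 1)) (e (f 2)) (e (f 3)) (e (f 4))
      ⟨hA 0 1 (by decide), hA 1 2 (by decide), hA 2 3 (by decide), hA 3 4 (by decide),
       hA 4 0 (by decide), hN 0 2 (by decide), hN 0 3 (by decide), hN 1 3 (by decide),
       hN 1 4 (by decide), hN 2 4 (by decide), hD 0 2 (by decide), hD 0 3 (by decide),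
       hD 1 3 (by decide), hD 1 4 (by decide), hD 2 4 (by decide)⟩
  | union G H hG hH hint ihG ihH =>
    rintro ⟨f, finj, hadj⟩
    classical
    have hmemU : ∀ i, ((f i : α) ∈ G.verts ∨ (f i : α) ∈ H.verts) := fun i => by
      have h1 : (f i : α) ∈ G.verts ∪ H.verts := by
        rw [← SimpleGraph.Subgraph.verts_sup]; exact (f i).2
      exact h1
    have hsup : ∀ i j : Fin 5, (G ⊔ H).Adj (f i) (f j) ↔ (j = i + 1 ∨ i = j + 1) := by
      intro i j
      rw [← SimpleGraph.Subgraph.coe_adj]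
      exact hadj i j
    -- adjacency of two G-vertices in the 5-cycle is realized in G
    have hGadj : ∀ i j : Fin 5, (f i : α) ∈ G.verts → (f j : α) ∈ G.verts →
        ((j = i + 1 ∨ i = j + 1) → G.Adj (f i) (f j)) := by
      intro i j hi hj hcyc
      rcases SimpleGraph.Subgraph.sup_adj.mp ((hsup i j).mpr hcyc) with h2 | h2
      · exact h2
      · have hmi : (f i : α) ∈ (G ⊓ H).verts := by
          rw [SimpleGraph.Subgraph.verts_inf]; exact ⟨hi, h2.fst_mem⟩
        have hmj : (f j : α) ∈ (G ⊓ H).verts := by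
          rw [SimpleGraph.Subgraph.verts_inf]; exact ⟨hj, h2.snd_mem⟩
        exact (SimpleGraph.Subgraph.inf_adj.mp (inter_adj hint hmi hmj h2.ne)).1
    have hHadj : ∀ i j : Fin 5, (f i : α) ∈ H.verts → (f j : α) ∈ H.verts →
        ((j = i + 1 ∨ i = j + 1) → H.Adj (f i) (f j)) := by
      intro i j hi hj hcyc
      rcases SimpleGraph.Subgraph.sup_adj.mp ((hsup i j).mpr hcyc) with h2 | h2
      · have hmi : (f i : α) ∈ (G ⊓ H).verts := by
          rw [SimpleGraph.Subgraph.verts_inf]; exact ⟨h2.fst_mem, hi⟩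
        have hmj : (f j : α) ∈ (G ⊓ H).verts := by
          rw [SimpleGraph.Subgraph.verts_inf]; exact ⟨h2.snd_mem, hj⟩
        exact (SimpleGraph.Subgraph.inf_adj.mp (inter_adj hint hmi hmj h2.ne)).2
      · exact h2
    by_cases hAll : ∀ i, (f i : α) ∈ G.verts
    · refine ihG ⟨fun i => ⟨f i, hAll i⟩, ?_, ?_⟩
      · intro i j hij
        exact finj (Subtype.ext (Subtype.mk_eq_mk.mp hij))
      · intro i j
        rw [SimpleGraph.Subgraph.coe_adj]
        constructor
        · intro h2
          exact (hsup i j).mp (SimpleGraph.Subgraph.sup_adj.mpr (Or.inl h2))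
        · exact hGadj i j (hAll i) (hAll j)
    by_cases hAllH : ∀ i, (f i : α) ∈ H.verts
    · refine ihH ⟨fun i => ⟨f i, hAllH i⟩, ?_, ?_⟩
      · intro i j hij
        exact finj (Subtype.ext (Subtype.mk_eq_mk.mp hij))
      · intro i j
        rw [SimpleGraph.Subgraph.coe_adj]
        constructor
        · intro h2
          exact (hsup i j).mp (SimpleGraph.Subgraph.sup_adj.mpr (Or.inr h2))
        · exact hHadj i j (hAllH i) (hAllH j)
    push_neg at hAll hAllH
    obtain ⟨i1, hi1⟩ := hAll
    obtain ⟨i0, hi0⟩ := hAllH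
    set g : Fin 5 → Fin 3 := fun i =>
      if (f i : α) ∈ G.verts then (if (f i : α) ∈ H.verts then 2 else 0) else 1 with hg
    have hg0 : ∀ i, g i = 0 → (f i : α) ∈ G.verts ∧ (f i : α) ∉ H.verts := by
      intro i hgi
      by_cases h1 : (f i : α) ∈ G.verts <;> by_cases h2 : (f i : α) ∈ H.verts <;>
        simp [hg, h1, h2] at hgi ⊢
    have hg1 : ∀ i, g i = 1 → (f i : α) ∉ G.verts ∧ (f i : α) ∈ H.verts := by
      intro i hgi
      have h1 : (f i : α) ∉ G.verts := by
        intro h1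
        by_cases h2 : (f i : α) ∈ H.verts <;> simp [hg, h1, h2] at hgi
      exact ⟨h1, (hmemU i).resolve_left h1⟩
    have hg2 : ∀ i, g i = 2 → (f i : α) ∈ G.verts ∧ (f i : α) ∈ H.verts := by
      intro i hgi
      by_cases h1 : (f i : α) ∈ G.verts <;> by_cases h2 : (f i : α) ∈ H.verts <;>
        simp [hg, h1, h2] at hgi ⊢
    obtain ⟨i, j, hcyc, hgi, hgj⟩ := fin5_cut g
      ⟨i0, by simp [hg, (hmemU i0).resolve_right hi0, hi0]⟩
      ⟨i1, by simp [hg, hi1]⟩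
      (by
        intro i j h2i h2j hne
        have hfi := hg2 i h2i
        have hfj := hg2 j h2j
        have hmi : (f i : α) ∈ (G ⊓ H).verts := by
          rw [SimpleGraph.Subgraph.verts_inf]; exact ⟨hfi.1, hfi.2⟩
        have hmj : (f j : α) ∈ (G ⊓ H).verts := by
          rw [SimpleGraph.Subgraph.verts_inf]; exact ⟨hfj.1, hfj.2⟩
        have hne' : (f i : α) ≠ (f j : α) := fun hc => hne (finj (Subtype.ext hc))
        have hadj2 := inter_adj hint hmi hmj hne'
        refine (hsup i j).mp (SimpleGraph.Subgraph.sup_adj.mpr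
          (Or.inl (SimpleGraph.Subgraph.inf_adj.mp hadj2).1)))
    have hfi := hg0 i hgi
    have hfj := hg1 j hgj
    rcases SimpleGraph.Subgraph.sup_adj.mp ((hsup i j).mpr hcyc) with h2 | h2
    · exact hfj.1 h2.snd_mem
    · exact hfi.2 h2.fst_mem

/-- Graphs in `G_sc` with at least 4 vertices contain no induced 5-cycle. -/
theorem gsc_no_induced_C5 {α : Type*} (G : AmbGraph α) (h : Gsc G)
    (h4 : 4 ≤ G.verts.ncard) :
    ¬ ∃ f : Fin 5 → G.verts, Function.Injective f ∧
        ∀ i j : Fin 5, G.coe.Adj (f i) (f j) ↔ (j = i + 1 ∨ i = j + 1) :=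
  gsc_no_C5 G h
end
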